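/- arXiv:1505.07174 — 9 statements merged into one kernel-verified Lean document; each statement's English description precedes it below -/
import Mathlib

section
/- Suppose the initial history functions are positive (N̂, P̂, Ẑ are all strictly positive on [−T,0]) and the conservation law holds at all times where the solution exists. Then the solution (N̂, P̂, Ẑ) of the fixed-delay DDE model on its maximal interval [0, ŵ) satisfies 0 < N̂(t̂) < N_T, 0 < P̂(t̂) < N_T, and 0 < Ẑ(t̂) < N_T for all t̂ ∈ [0, ŵ). -/
/-!
Let `t₀` be the first time at which one of `N̂, P̂, Ẑ` vanishes. Up to `t₀` all three are
nonnegative, so the delay integral in the conservation law is nonnegative; hence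
`N̂ + P̂ + Ẑ ≤ N_T`, which bounds the three components and makes the free-nutrient term
`N_T − N̂ − P̂ − Ẑ` nonnegative. Since `f` and `h` are Lipschitz near `0` and vanish there, and
`R(P̂)` is bounded below on `[0, t₀]`, every loss term is at most linear in the component it
depletes, so each component satisfies `x' ≥ −K x` on `[0, t₀]` and `x(t₀) ≥ x(0) e^{−K t₀} > 0`.
This contradicts the choice of `t₀`; the upper bounds then follow from the conservation law.
-/

open Real Set Filter Topology

lemma nonneg_of_deriv_nonneg {f : ℝ → ℝ} (hf : Differentiable ℝ f) (hf0 : f 0 = 0)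
    (hf' : ∀ x ≥ 0, 0 ≤ deriv f x) {x : ℝ} (hx : 0 ≤ x) : 0 ≤ f x := by
  have hmono : MonotoneOn f (Ici 0) :=
    monotoneOn_of_deriv_nonneg (convex_Ici 0) hf.continuous.continuousOn
      hf.differentiableOn ?_
  · simpa [hf0] using hmono (mem_Ici.mpr le_rfl) hx hx
  · intro y hy
    rw [interior_Ici] at hy
    exact hf' y (le_of_lt hy)

lemma LocallyLipschitz.exists_le_mul_of_map_zero {f : ℝ → ℝ} (hf : LocallyLipschitz f)
    (hf0 : f 0 = 0) (M : ℝ) : ∃ L : ℝ, 0 ≤ L ∧ ∀ x ∈ Icc 0 M, f x ≤ L * x := by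
  obtain ⟨K, hK⟩ := hf.locallyLipschitzOn.exists_lipschitzOnWith_of_compact
    (isCompact_Icc (a := 0) (b := M))
  refine ⟨K, K.2, fun x hx => ?_⟩
  have := hK.dist_le_mul x hx 0 (left_mem_Icc.mpr (hx.1.trans hx.2))
  rw [hf0, Real.dist_eq, Real.dist_eq, sub_zero, sub_zero, abs_of_nonneg hx.1] at this
  exact (le_abs_self _).trans this

lemma pos_of_hasDerivAt_ge_neg_mul {x x' : ℝ → ℝ} {K a b : ℝ} (hab : a ≤ b)
    (hd : ∀ t ∈ Icc a b, HasDerivAt x (x' t) t) (hge : ∀ t ∈ Icc a b, -(K * x t) ≤ x' t)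
    (ha : 0 < x a) : 0 < x b := by
  have hy : ∀ t ∈ Icc a b, HasDerivAt (fun t => x t * exp (K * t))
      (x' t * exp (K * t) + x t * (exp (K * t) * K)) t := fun t ht =>
    (hd t ht).mul (by simpa using ((hasDerivAt_id t).const_mul K).exp)
  have hmono : MonotoneOn (fun t => x t * exp (K * t)) (Icc a b) := by
    refine monotoneOn_of_deriv_nonneg (convex_Icc a b)
      (fun t ht => (hy t ht).continuousAt.continuousWithinAt)
      (fun t ht => (hy t (interior_subset ht)).differentiableAt.differentiableWithinAt)
      (fun t ht => ?_)
    have ht' := interior_subset ht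
    rw [(hy t ht').deriv]
    nlinarith [hge t ht', exp_pos (K * t)]
  have := hmono (left_mem_Icc.mpr hab) (right_mem_Icc.mpr hab) hab
  exact pos_of_mul_pos_left ((mul_pos ha (exp_pos _)).trans_le this) (exp_pos _).le

lemma pos_on_Icc_of_nonneg_imp_pos {x : ℝ → ℝ} {a b : ℝ} (hx : ContinuousOn x (Icc a b))
    (ha : 0 < x a) (hstep : ∀ t ∈ Icc a b, (∀ u ∈ Icc a t, 0 ≤ x u) → 0 < x t) :
    ∀ t ∈ Icc a b, 0 < x t := by
  by_contra! hbad
  set S := Icc a b ∩ x ⁻¹' Iic 0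
  have hS : IsCompact S :=
    isCompact_Icc.of_isClosed_subset (hx.preimage_isClosed_of_isClosed isClosed_Icc isClosed_Iic)
      inter_subset_left
  obtain ⟨t₀, ht₀, hmin⟩ := hS.exists_isLeast hbad
  have hbefore : ∀ u ∈ Ico a t₀, 0 < x u := fun u hu => by
    by_contra! hu'
    exact hu.2.not_ge (hmin ⟨⟨hu.1, hu.2.le.trans ht₀.1.2⟩, hu'⟩)
  -- a sign change before `t₀` would contradict its minimality
  have ht₀nonneg : 0 ≤ x t₀ := by
    by_contra! hneg
    have hat₀ : a ≤ t₀ := ht₀.1.1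
    obtain ⟨c, hc, hc0⟩ := intermediate_value_Icc' hat₀ (hx.mono (Icc_subset_Icc_right ht₀.1.2))
      ⟨hneg.le, ha.le⟩
    exact (hbefore c ⟨hc.1, lt_of_le_of_ne hc.2 (by rintro rfl; linarith)⟩).ne' hc0
  refine (hstep t₀ ht₀.1 fun u hu => ?_).not_ge ht₀.2
  rcases hu.2.lt_or_eq with hlt | rfl
  · exact (hbefore u ⟨hu.1, hlt⟩).le
  · exact ht₀nonneg

lemma neg_mul_le_mul_of_neg_le {q Q c B : ℝ} (hq : 0 ≤ q) (hqQ : q ≤ Q) (hc : 0 ≤ c)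
    (hB : -c ≤ B) : -(Q * c) ≤ q * B := by
  nlinarith

theorem npz_pos_of_nonneg_on_Icc
    {f h R Nh Ph Zh : ℝ → ℝ} {τh : ℝ → ℝ → ℝ} {μ lam g δ δ0 γ m NT Rstar T t : ℝ}
    (hf : LocallyLipschitz f) (hh : LocallyLipschitz h) (hR : Continuous R)
    (hf0 : f 0 = 0) (hh0 : h 0 = 0)
    (hfnn : ∀ x, 0 ≤ x → 0 ≤ f x) (hhnn : ∀ x, 0 ≤ x → 0 ≤ h x)
    (hμ : 0 ≤ μ) (hlam : 0 ≤ lam) (hg : 0 ≤ g) (hδ : 0 ≤ δ) (hδ0 : 0 ≤ δ0) (hγ : γ ∈ Icc 0 1)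
    (hRstar : 0 ≤ Rstar) (hT : 0 ≤ T) (ht : 0 ≤ t)
    (hPcont : ContinuousOn Ph (Icc 0 t)) (hRP : ∀ s ∈ Icc (-T) t, 0 < R (Ph s))
    (hNeq : ∀ s ∈ Icc 0 t, HasDerivAt Nh ((Rstar / R (Ph s)) *
        (-μ * Ph s * f (Nh s) + lam * Ph s + δ * Zh s + (1 - γ) * g * Zh s * h (Ph s)
          + δ0 * (NT - Nh s - Ph s - Zh s))) s)
    (hPeq : ∀ s ∈ Icc 0 t, HasDerivAt Ph ((Rstar / R (Ph s)) *
        (μ * Ph s * f (Nh s) - lam * Ph s - g * Zh s * h (Ph s))) s)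
    (hZeq : ∀ s ∈ Icc 0 t, HasDerivAt Zh (γ * g * exp (-δ0 * τh m s) * (Rstar / R (Ph (s - T))) *
        Zh (s - T) * h (Ph (s - T)) - (Rstar / R (Ph s)) * δ * Zh s) s)
    (hnonneg : ∀ s ∈ Icc (-T) t, 0 ≤ Nh s ∧ 0 ≤ Ph s ∧ 0 ≤ Zh s)
    (hfree : ∀ s ∈ Icc 0 t, Nh s + Ph s + Zh s ≤ NT)
    (h0 : 0 < Nh 0 ∧ 0 < Ph 0 ∧ 0 < Zh 0) :
    0 < Nh t ∧ 0 < Ph t ∧ 0 < Zh t := by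
  have hIcc : Icc 0 t ⊆ Icc (-T) t := Icc_subset_Icc_left (by linarith)
  obtain ⟨Q, hQ⟩ := isCompact_Icc.exists_bound_of_continuousOn <|
    continuousOn_const.div (hR.comp_continuousOn hPcont) fun s hs => (hRP s (hIcc hs)).ne'
  have hq : ∀ s ∈ Icc 0 t, 0 ≤ Rstar / R (Ph s) ∧ Rstar / R (Ph s) ≤ Q := fun s hs =>
    ⟨div_nonneg hRstar (hRP s (hIcc hs)).le, (le_abs_self _).trans (hQ s hs)⟩
  obtain ⟨Lf, hLf0, hLf⟩ := hf.exists_le_mul_of_map_zero hf0 NT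
  obtain ⟨Lh, hLh0, hLh⟩ := hh.exists_le_mul_of_map_zero hh0 NT
  refine ⟨pos_of_hasDerivAt_ge_neg_mul (K := Q * (μ * NT * Lf)) ht hNeq (fun s hs => ?_) h0.1,
    pos_of_hasDerivAt_ge_neg_mul (K := Q * (lam + g * NT * Lh)) ht hPeq (fun s hs => ?_) h0.2.1,
    pos_of_hasDerivAt_ge_neg_mul (K := Q * δ) ht hZeq (fun s hs => ?_) h0.2.2⟩
  all_goals
    obtain ⟨hN, hP, hZ⟩ := hnonneg s (hIcc hs)
    have hsum := hfree s hs
    obtain ⟨hq0, hqQ⟩ := hq s hs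
    have hNT : 0 ≤ NT := by linarith
  · have hfN : μ * Ph s * f (Nh s) ≤ μ * NT * (Lf * Nh s) :=
      mul_le_mul (by gcongr; linarith) (hLf (Nh s) ⟨hN, by linarith⟩) (hfnn _ hN) (by positivity)
    have hrecycled : 0 ≤ (1 - γ) * g * Zh s * h (Ph s) := by
      have := hhnn _ hP
      have : 0 ≤ 1 - γ := by linarith [hγ.2]
      positivity
    rw [mul_assoc]
    refine neg_mul_le_mul_of_neg_le hq0 hqQ (by positivity) ?_
    nlinarith [mul_nonneg hδ0 (sub_nonneg.mpr hsum)]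
  · have hhP : g * Zh s * h (Ph s) ≤ g * NT * (Lh * Ph s) :=
      mul_le_mul (by gcongr; linarith) (hLh (Ph s) ⟨hP, by linarith⟩) (hhnn _ hP) (by positivity)
    rw [mul_assoc]
    refine neg_mul_le_mul_of_neg_le hq0 hqQ (by positivity) ?_
    nlinarith [mul_nonneg (mul_nonneg hμ hP) (hfnn _ hN)]
  · have hsT : s - T ∈ Icc (-T) t := ⟨by linarith [hs.1], by linarith [hs.2]⟩
    obtain ⟨-, hPT, hZT⟩ := hnonneg _ hsT
    have hinflow : 0 ≤ γ * g * exp (-δ0 * τh m s) * (Rstar / R (Ph (s - T))) *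
        Zh (s - T) * h (Ph (s - T)) := by
      have := hγ.1; have := (hRP _ hsT).le; have := hhnn _ hPT
      positivity
    nlinarith [mul_le_mul_of_nonneg_right hqQ (mul_nonneg hδ hZ)]

lemma delay_integral_nonneg {R h Ph Zh : ℝ → ℝ} {τh : ℝ → ℝ → ℝ} {γ g δ0 m Rstar t : ℝ}
    (hγ : 0 ≤ γ) (hg : 0 ≤ g) (hm : 0 ≤ m) (hRstar : 0 < Rstar)
    (hwin : ∀ u ∈ Icc (t - m / Rstar) t, 0 ≤ Zh u ∧ 0 ≤ h (Ph u) ∧ 0 ≤ R (Ph u)) :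
    0 ≤ ∫ s in (0 : ℝ)..m, exp (-δ0 * τh s t) * γ * g * Zh (t - s / Rstar) *
      h (Ph (t - s / Rstar)) / R (Ph (t - s / Rstar)) := by
  refine intervalIntegral.integral_nonneg hm fun s hs => ?_
  have hmem : t - s / Rstar ∈ Icc (t - m / Rstar) t :=
    ⟨by gcongr; exact hs.2, sub_le_self _ (div_nonneg hs.1 hRstar.le)⟩
  obtain ⟨hZ, hh, hR⟩ := hwin _ hmem
  positivity

theorem stmt_0_general
    (f h R : ℝ → ℝ) (μ lam g δ δ0 γ m NT Rstar T : ℝ)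
    (hf : ContDiff ℝ 1 f) (hh : ContDiff ℝ 1 h) (hR : ContDiff ℝ 1 R)
    (hf0 : f 0 = 0) (hf' : ∀ N ≥ (0 : ℝ), 0 < deriv f N)
    (hh0 : h 0 = 0) (hh' : ∀ P ≥ (0 : ℝ), 0 < deriv h P)
    (hμ : 0 < μ) (hlam : 0 < lam) (hg : 0 < g) (hδ : 0 < δ) (hδ0 : 0 ≤ δ0)
    (hγ : γ ∈ Ioc (0 : ℝ) 1)
    (hm : 0 < m) (hRstar : 0 < Rstar) (hT : T = m / Rstar)
    (w : EReal)
    (Nh Ph Zh : ℝ → ℝ) (τh : ℝ → ℝ → ℝ)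
    (hNcont : ContinuousOn Nh {t : ℝ | -T ≤ t ∧ (t : EReal) < w})
    (hPcont : ContinuousOn Ph {t : ℝ | -T ≤ t ∧ (t : EReal) < w})
    (hZcont : ContinuousOn Zh {t : ℝ | -T ≤ t ∧ (t : EReal) < w})
    (hRPpos : ∀ t : ℝ, -T ≤ t → (t : EReal) < w → 0 < R (Ph t))
    (hNeq : ∀ t : ℝ, 0 ≤ t → (t : EReal) < w →
      HasDerivAt Nh ((Rstar / R (Ph t)) *
        (-μ * Ph t * f (Nh t) + lam * Ph t + δ * Zh t + (1 - γ) * g * Zh t * h (Ph t)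
          + δ0 * (NT - Nh t - Ph t - Zh t))) t)
    (hPeq : ∀ t : ℝ, 0 ≤ t → (t : EReal) < w →
      HasDerivAt Ph ((Rstar / R (Ph t)) *
        (μ * Ph t * f (Nh t) - lam * Ph t - g * Zh t * h (Ph t))) t)
    (hZeq : ∀ t : ℝ, 0 ≤ t → (t : EReal) < w →
      HasDerivAt Zh (γ * g * Real.exp (-δ0 * τh m t) * (Rstar / R (Ph (t - T))) *
        Zh (t - T) * h (Ph (t - T)) - (Rstar / R (Ph t)) * δ * Zh t) t)
    (hhist : ∀ t : ℝ, -T ≤ t → t ≤ 0 → 0 < Nh t ∧ 0 < Ph t ∧ 0 < Zh t)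
    (hcons : ∀ t : ℝ, 0 ≤ t → (t : EReal) < w →
      NT = Nh t + Ph t + Zh t +
        ∫ s in (0 : ℝ)..m, Real.exp (-δ0 * τh s t) * γ * g * Zh (t - s / Rstar) *
          h (Ph (t - s / Rstar)) / R (Ph (t - s / Rstar))) :
    ∀ t : ℝ, 0 ≤ t → (t : EReal) < w →
      Nh t ∈ Ioo 0 NT ∧ Ph t ∈ Ioo 0 NT ∧ Zh t ∈ Ioo 0 NT := by
  have hT0 : 0 ≤ T := hT ▸ by positivity
  have hfnn : ∀ x, 0 ≤ x → 0 ≤ f x := fun x =>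
    nonneg_of_deriv_nonneg (hf.differentiable one_ne_zero) hf0 fun y hy => (hf' y hy).le
  have hhnn : ∀ x, 0 ≤ x → 0 ≤ h x := fun x =>
    nonneg_of_deriv_nonneg (hh.differentiable one_ne_zero) hh0 fun y hy => (hh' y hy).le
  have hlt : ∀ {s t : ℝ}, s ≤ t → (t : EReal) < w → (s : EReal) < w := fun hst htw =>
    (EReal.coe_le_coe_iff.mpr hst).trans_lt htw
  have hD : ∀ {t : ℝ}, (t : EReal) < w → Icc (-T) t ⊆ {s : ℝ | -T ≤ s ∧ (s : EReal) < w} :=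
    fun htw s hs => ⟨hs.1, hlt hs.2 htw⟩
  have hbound : ∀ t : ℝ, 0 ≤ t → (t : EReal) < w →
      (∀ s ∈ Icc (-T) t, 0 ≤ Nh s ∧ 0 ≤ Ph s ∧ 0 ≤ Zh s) → Nh t + Ph t + Zh t ≤ NT := by
    intro t ht htw hnn
    rw [hcons t ht htw]
    refine le_add_of_nonneg_right (delay_integral_nonneg hγ.1.le hg.le hm.le hRstar fun u hu => ?_)
    have hu' : u ∈ Icc (-T) t := ⟨by rw [hT]; linarith [hu.1], hu.2⟩
    exact ⟨(hnn u hu').2.2, hhnn _ (hnn u hu').2.1, (hRPpos u hu'.1 (hlt hu'.2 htw)).le⟩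
  have hpos : ∀ t : ℝ, -T ≤ t → (t : EReal) < w → 0 < Nh t ∧ 0 < Ph t ∧ 0 < Zh t := by
    intro b hb hbw
    have key := pos_on_Icc_of_nonneg_imp_pos (x := fun t => Nh t ⊓ (Ph t ⊓ Zh t))
      ((hNcont.inf (hPcont.inf hZcont)).mono (hD hbw))
      (by simpa only [lt_inf_iff] using hhist (-T) le_rfl (by linarith)) ?_ b ⟨hb, le_rfl⟩
    · simpa only [lt_inf_iff] using key
    intro t ht hnn
    simp only [le_inf_iff] at hnn
    rcases le_or_gt t 0 with ht0 | ht0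
    · simpa only [lt_inf_iff] using hhist t ht.1 ht0
    have htw := hlt ht.2 hbw
    simpa only [lt_inf_iff] using npz_pos_of_nonneg_on_Icc hf.locallyLipschitz hh.locallyLipschitz
      hR.continuous hf0 hh0 hfnn hhnn hμ.le hlam.le hg.le hδ.le hδ0 ⟨hγ.1.le, hγ.2⟩ hRstar.le
      hT0 ht0.le (hPcont.mono ((Icc_subset_Icc_left (by linarith)).trans (hD htw)))
      (fun s hs => hRPpos s hs.1 (hlt hs.2 htw))
      (fun s hs => hNeq s hs.1 (hlt hs.2 htw)) (fun s hs => hPeq s hs.1 (hlt hs.2 htw))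
      (fun s hs => hZeq s hs.1 (hlt hs.2 htw)) hnn
      (fun s hs => hbound s hs.1 (hlt hs.2 htw) fun u hu => hnn u ⟨hu.1, hu.2.trans hs.2⟩)
      (hhist 0 (by linarith) le_rfl)
  intro t ht htw
  obtain ⟨hN, hP, hZ⟩ := hpos t (by linarith) htw
  have hsum := hbound t ht htw fun s hs =>
    let ⟨hN', hP', hZ'⟩ := hpos s hs.1 (hlt hs.2 htw); ⟨hN'.le, hP'.le, hZ'.le⟩
  exact ⟨⟨hN, by linarith⟩, ⟨hP, by linarith⟩, ⟨hZ, by linarith⟩⟩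

/-- Positivity and boundedness of solutions of the fixed-delay DDE form of the closed NPZ
model: if the initial history functions are positive on `[−T, 0]` and the conservation law
holds on `[0, ŵ)`, then `N̂, P̂, Ẑ ∈ (0, N_T)` on the maximal interval `[0, ŵ)`
(where `0 < ŵ ≤ ∞` is encoded as an extended real number). -/
theorem stmt_0
    (f h R : ℝ → ℝ) (μ lam g δ δ0 γ m NT Rstar Rinf T : ℝ)
    (hf : ContDiff ℝ 1 f) (hh : ContDiff ℝ 1 h) (hR : ContDiff ℝ 1 R)
    (hf0 : f 0 = 0) (hf' : ∀ N ≥ (0 : ℝ), 0 < deriv f N) (hftop : Tendsto f atTop (𝓝 1))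
    (hh0 : h 0 = 0) (hh' : ∀ P ≥ (0 : ℝ), 0 < deriv h P) (hhtop : Tendsto h atTop (𝓝 1))
    (hRnn : ∀ P ≥ (0 : ℝ), 0 ≤ R P) (hR' : ∀ P ≥ (0 : ℝ), 0 ≤ deriv R P)
    (hRpos : ∀ P > (0 : ℝ), 0 < R P) (hRtop : Tendsto R atTop (𝓝 Rinf))
    (hμ : 0 < μ) (hlam : 0 < lam) (hg : 0 < g) (hδ : 0 < δ) (hδ0 : 0 ≤ δ0)
    (hγ : γ ∈ Ioc (0 : ℝ) 1) (hμlam : lam < μ) (hγg : δ < γ * g)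
    (hm : 0 < m) (hNT : 0 < NT) (hRstar : 0 < Rstar) (hT : T = m / Rstar)
    (w : EReal) (hw : 0 < w)
    (Nh Ph Zh : ℝ → ℝ) (τh : ℝ → ℝ → ℝ)
    (hτh : ∀ s t : ℝ, τh s t = ∫ r in (t - s / Rstar)..t, Rstar / R (Ph r))
    (hNcont : ContinuousOn Nh {t : ℝ | -T ≤ t ∧ (t : EReal) < w})
    (hPcont : ContinuousOn Ph {t : ℝ | -T ≤ t ∧ (t : EReal) < w})
    (hZcont : ContinuousOn Zh {t : ℝ | -T ≤ t ∧ (t : EReal) < w})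
    (hRPpos : ∀ t : ℝ, -T ≤ t → (t : EReal) < w → 0 < R (Ph t))
    (hNeq : ∀ t : ℝ, 0 ≤ t → (t : EReal) < w →
      HasDerivAt Nh ((Rstar / R (Ph t)) *
        (-μ * Ph t * f (Nh t) + lam * Ph t + δ * Zh t + (1 - γ) * g * Zh t * h (Ph t)
          + δ0 * (NT - Nh t - Ph t - Zh t))) t)
    (hPeq : ∀ t : ℝ, 0 ≤ t → (t : EReal) < w →
      HasDerivAt Ph ((Rstar / R (Ph t)) *
        (μ * Ph t * f (Nh t) - lam * Ph t - g * Zh t * h (Ph t))) t)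
    (hZeq : ∀ t : ℝ, 0 ≤ t → (t : EReal) < w →
      HasDerivAt Zh (γ * g * Real.exp (-δ0 * τh m t) * (Rstar / R (Ph (t - T))) *
        Zh (t - T) * h (Ph (t - T)) - (Rstar / R (Ph t)) * δ * Zh t) t)
    (hhist : ∀ t : ℝ, -T ≤ t → t ≤ 0 → 0 < Nh t ∧ 0 < Ph t ∧ 0 < Zh t)
    (hcons : ∀ t : ℝ, 0 ≤ t → (t : EReal) < w →
      NT = Nh t + Ph t + Zh t +
        ∫ s in (0 : ℝ)..m, Real.exp (-δ0 * τh s t) * γ * g * Zh (t - s / Rstar) *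
          h (Ph (t - s / Rstar)) / R (Ph (t - s / Rstar))) :
    ∀ t : ℝ, 0 ≤ t → (t : EReal) < w →
      Nh t ∈ Ioo 0 NT ∧ Ph t ∈ Ioo 0 NT ∧ Zh t ∈ Ioo 0 NT :=
  stmt_0_general f h R μ lam g δ δ0 γ m NT Rstar T hf hh hR hf0 hf' hh0 hh' hμ hlam hg hδ hδ0 hγ hm
    hRstar hT w Nh Ph Zh τh hNcont hPcont hZcont hRPpos hNeq hPeq hZeq hhist hcons
end

section
/- Suppose P, N, Z : [t0, ∞) → ℝ with P continuously differentiable, P(t) > 0, Z(t) ≥ 0, 0 < N(t) < N_T − P(t), and P'(t) = μP(t)f(N(t)) − λP(t) − gZ(t)h(P(t)) for all t ≥ t0, where h(p) ≥ 0 for p ≥ 0. If N_T > N_{T1} := f⁻¹(λ/μ), then for every constant β with N_T − N_{T1} < β < N_T there exists t1 ≥ t0 such that P(t) < β for all t ≥ t1. -/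
open Real Set Filter Topology

/-!
Fix `N_T − N_{T1} < b < β`. While `P ≥ b`, the bound `N < N_T − P ≤ N_T − b` and the
monotonicity of `f` give `f N ≤ f (N_T − b) < f N_{T1} = λ / μ`, so
`P' ≤ -(λ - μ f (N_T − b)) b < 0`. Hence `P` drops below `b` in finite time, and it can never
climb back over the level `b`, where its derivative is negative.
-/

theorem strictMonoOn_Ici_of_deriv_pos {f : ℝ → ℝ} {a : ℝ} (hf : ∀ x ≥ a, 0 < deriv f x) :
    StrictMonoOn f (Ici a) := by
  have hdiff : ∀ x ≥ a, DifferentiableAt ℝ f x := fun x hx =>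
    differentiableAt_of_deriv_ne_zero (hf x hx).ne'
  refine strictMonoOn_of_deriv_pos (convex_Ici a)
    (fun x hx => (hdiff x hx).continuousAt.continuousWithinAt) fun x hx => ?_
  rw [interior_Ici] at hx
  exact hf x hx.le

section Trapping

variable {P P' : ℝ → ℝ} {t0 β : ℝ}

theorem forall_ge_le_of_deriv_neg_of_eq (hP : ∀ t ≥ t0, HasDerivAt P (P' t) t)
    (h0 : P t0 ≤ β) (hβ : ∀ t ≥ t0, P t = β → P' t < 0) : ∀ t ≥ t0, P t ≤ β := by
  intro t ht
  refine image_le_of_deriv_right_lt_deriv_boundary (B := fun _ => β) (B' := fun _ => 0)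
    (fun s hs => (hP s hs.1).continuousAt.continuousWithinAt)
    (fun s hs => (hP s hs.1).hasDerivWithinAt) h0 (fun _ => hasDerivAt_const _ _)
    (fun s hs => hβ s hs.1) ⟨ht, le_rfl⟩

theorem exists_lt_of_deriv_le_neg {ε : ℝ} (hε : 0 < ε) (hP : ∀ t ≥ t0, HasDerivAt P (P' t) t)
    (hβ : ∀ t ≥ t0, β ≤ P t → P' t ≤ -ε) : ∃ t ≥ t0, P t < β := by
  by_contra! hge
  set T := t0 + (P t0 - β + 1) / ε
  have hT : t0 ≤ T := le_add_of_nonneg_right (div_nonneg (by linarith [hge t0 le_rfl]) hε.le)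
  have hlin : P T ≤ P t0 - ε * (T - t0) :=
    image_le_of_deriv_right_le_deriv_boundary (B := fun t => P t0 - ε * (t - t0))
      (B' := fun _ => -ε) (fun s hs => (hP s hs.1).continuousAt.continuousWithinAt)
      (fun s hs => (hP s hs.1).hasDerivWithinAt) (by simp) (by fun_prop)
      (fun _ _ => by simpa using ((hasDerivAt_id _).sub_const t0).const_mul ε |>.const_sub (P t0)
        |>.hasDerivWithinAt)
      (fun s hs => hβ s hs.1 (hge s hs.1)) ⟨hT, le_rfl⟩
  have : ε * (T - t0) = P t0 - β + 1 := by
    rw [add_sub_cancel_left, mul_div_cancel₀ _ hε.ne']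
  linarith [hge T hT]

theorem exists_forall_ge_le_of_deriv_le_neg {ε : ℝ} (hε : 0 < ε)
    (hP : ∀ t ≥ t0, HasDerivAt P (P' t) t) (hβ : ∀ t ≥ t0, β ≤ P t → P' t ≤ -ε) :
    ∃ t1 ≥ t0, ∀ t ≥ t1, P t ≤ β := by
  obtain ⟨t1, ht1, hlt⟩ := exists_lt_of_deriv_le_neg hε hP hβ
  refine ⟨t1, ht1, forall_ge_le_of_deriv_neg_of_eq (fun t ht => hP t (ht1.trans ht)) hlt.le
    fun t ht hPt => ?_⟩
  linarith [hβ t (ht1.trans ht) hPt.ge]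

end Trapping

theorem growth_rate_le {μ lam g p φ c z η b : ℝ} (hμ : 0 ≤ μ) (hφ : φ ≤ c)
    (hc : μ * c ≤ lam) (hb : 0 ≤ b) (hbp : b ≤ p) (hloss : 0 ≤ g * z * η) :
    μ * p * φ - lam * p - g * z * η ≤ -((lam - μ * c) * b) := by
  have : (lam - μ * c) * b ≤ (lam - μ * φ) * p :=
    mul_le_mul (by nlinarith) hbp hb (by nlinarith)
  nlinarith

theorem stmt_4_general (f h : ℝ → ℝ) (μ lam g NT NT1 t0 : ℝ)
    (hf' : ∀ x ≥ (0 : ℝ), 0 < deriv f x)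
    (hhnn : ∀ p ≥ (0 : ℝ), 0 ≤ h p)
    (hμ : 0 < μ) (hg : 0 < g)
    (hNT1 : 0 ≤ NT1) (hNT1f : f NT1 = lam / μ)
    (P N Z : ℝ → ℝ)
    (hPeq : ∀ t ≥ t0, HasDerivAt P (μ * P t * f (N t) - lam * P t - g * Z t * h (P t)) t)
    (hZnn : ∀ t ≥ t0, 0 ≤ Z t)
    (hNb : ∀ t ≥ t0, 0 < N t ∧ N t < NT - P t)
    (hNT : NT1 < NT)
    (β : ℝ) (hβ1 : NT - NT1 < β) (hβ2 : β < NT) :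
    ∃ t1 ≥ t0, ∀ t ≥ t1, P t < β := by
  obtain ⟨b, hb1, hb2⟩ := exists_between hβ1
  have hfmono : StrictMonoOn f (Ici 0) := strictMonoOn_Ici_of_deriv_pos hf'
  have hb0 : 0 < b := by linarith
  have hrate : μ * f (NT - b) < lam := by
    have : f (NT - b) < lam / μ :=
      hNT1f ▸ hfmono (mem_Ici.2 (by linarith)) (mem_Ici.2 hNT1) (by linarith)
    rwa [lt_div_iff₀' hμ] at this
  obtain ⟨t1, ht1, hle⟩ := exists_forall_ge_le_of_deriv_le_neg
    (mul_pos (sub_pos.2 hrate) hb0) hPeq fun t ht hbP => by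
      obtain ⟨hN0, hNlt⟩ := hNb t ht
      refine growth_rate_le hμ.le ?_ hrate.le hb0.le hbP
        (mul_nonneg (mul_nonneg hg.le (hZnn t ht)) (hhnn _ (by linarith)))
      exact hfmono.monotoneOn (mem_Ici.2 hN0.le) (mem_Ici.2 (by linarith)) (by linarith)
  exact ⟨t1, ht1, fun t ht => (hle t ht).trans_lt (by linarith)⟩

/-- Lemma (eventual upper bound on phytoplankton): if `N_T > N_{T1} = f⁻¹(λ/μ)` then for any
`β` with `N_T − N_{T1} < β < N_T` the phytoplankton concentration eventually stays below `β`. -/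
theorem stmt_4 (f h : ℝ → ℝ) (μ lam g NT NT1 t0 : ℝ)
    (hf : ContDiff ℝ 1 f) (hf0 : f 0 = 0) (hf' : ∀ x ≥ (0 : ℝ), 0 < deriv f x)
    (hftop : Tendsto f atTop (𝓝 1))
    (hh : ContDiff ℝ 1 h) (hh0 : h 0 = 0) (hh' : ∀ x ≥ (0 : ℝ), 0 < deriv h x)
    (hhnn : ∀ p ≥ (0 : ℝ), 0 ≤ h p)
    (hμ : 0 < μ) (hlam : 0 < lam) (hg : 0 < g) (hμlam : lam < μ)
    (hNT1 : 0 ≤ NT1) (hNT1f : f NT1 = lam / μ)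
    (P N Z : ℝ → ℝ)
    (hPeq : ∀ t ≥ t0, HasDerivAt P (μ * P t * f (N t) - lam * P t - g * Z t * h (P t)) t)
    (hPpos : ∀ t ≥ t0, 0 < P t)
    (hZnn : ∀ t ≥ t0, 0 ≤ Z t)
    (hNb : ∀ t ≥ t0, 0 < N t ∧ N t < NT - P t)
    (hNT : NT1 < NT)
    (β : ℝ) (hβ1 : NT - NT1 < β) (hβ2 : β < NT) :
    ∃ t1 ≥ t0, ∀ t ≥ t1, P t < β :=
  stmt_4_general f h μ lam g NT NT1 t0 hf' hhnn hμ hg hNT1 hNT1f P N Z hPeq hZnn hNb hNT β hβ1 hβ2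
end

section
/- Let δ > 0, T ≥ 0, and b ∈ ℝ with 0 ≤ b < δ. Then every complex number s satisfying s + δ − b e^{−sT} = 0 has Re(s) < 0. -/
open Real Set Filter Topology

/-! On the closed right half-plane `|e^{-sT}| ≤ 1`, so a root there would satisfy
`Re s + δ ≤ |s + δ| = b |e^{-sT}| ≤ b < δ`, forcing `Re s < 0` after all. -/

theorem Complex.norm_exp_neg_mul_ofReal_le_one {s : ℂ} {T : ℝ} (hs : 0 ≤ s.re) (hT : 0 ≤ T) :
    ‖Complex.exp (-s * T)‖ ≤ 1 := by
  rw [Complex.norm_exp, Real.exp_le_one_iff]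
  simpa [Complex.mul_re] using mul_nonneg hs hT

theorem stmt_6_general (δ T b : ℝ) (hT : 0 ≤ T) (hb : 0 ≤ b) (hbδ : b < δ)
    (s : ℂ) (hs : s + (δ : ℂ) - (b : ℂ) * Complex.exp (-s * (T : ℂ)) = 0) :
    s.re < 0 := by
  by_contra! hre
  have hroot : s + δ = b * Complex.exp (-s * T) := by linear_combination hs
  have : s.re + δ ≤ b :=
    calc s.re + δ = (s + δ).re := by simp
      _ ≤ ‖s + δ‖ := Complex.re_le_norm _
      _ = b * ‖Complex.exp (-s * T)‖ := by
        rw [hroot, norm_mul, Complex.norm_real, Real.norm_of_nonneg hb]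
      _ ≤ b := mul_le_of_le_one_right hb (Complex.norm_exp_neg_mul_ofReal_le_one hre hT)
  linarith

/-- Transcendental root-location lemma: if `0 ≤ b < δ` and `T ≥ 0`, every complex root `s`
of `s + δ - b e^{-sT} = 0` has negative real part. -/
theorem stmt_6 (δ T b : ℝ) (hδ : 0 < δ) (hT : 0 ≤ T) (hb : 0 ≤ b) (hbδ : b < δ)
    (s : ℂ) (hs : s + (δ : ℂ) - (b : ℂ) * Complex.exp (-s * (T : ℂ)) = 0) :
    s.re < 0 :=
  stmt_6_general δ T b hT hb hbδ s hs
end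

section
/- Let μ, g, γ, δ, δ0, T > 0, P₁* > 0, a > 0, d ≥ 0, and suppose γ g d e^{−δ0 T} < δ. Then every complex root s of (s + μP₁*a)(s + δ0)(s + δ − γ g d e^{−(δ0+s)T}) = 0, which is the characteristic equation of the NPZ system linearized about the phytoplankton-only equilibrium E₁ = (N₁*, P₁*, 0) with a = f'(N₁*) and d = h(P₁*), has Re(s) < 0. -/
open Real Set Filter Topology

lemma Complex.re_neg_of_add_ofReal_eq_zero {s : ℂ} {c : ℝ} (hc : 0 < c) (hs : s + c = 0) :
    s.re < 0 := by
  rw [eq_neg_of_add_eq_zero_left hs, Complex.neg_re, Complex.ofReal_re]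
  exact neg_neg_of_pos hc

lemma Complex.norm_ofReal_mul_exp_delay_le {b κ τ : ℝ} (hb : 0 ≤ b) (hτ : 0 ≤ τ) {s : ℂ}
    (hs : 0 ≤ s.re) :
    ‖(b : ℂ) * Complex.exp (-((κ : ℂ) + s) * (τ : ℂ))‖ ≤ b * Real.exp (-κ * τ) := by
  have hre : (-((κ : ℂ) + s) * (τ : ℂ)).re = -(κ + s.re) * τ := by simp [Complex.mul_re]
  rw [norm_mul, Complex.norm_exp, Complex.norm_real, Real.norm_of_nonneg hb, hre]
  gcongr
  nlinarith

/-- A root of `s + δ = b e^{-(κ + s)τ}` in the closed right half-plane would satisfy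
`δ ≤ |s + δ| ≤ b e^{-κτ}`. -/
lemma Complex.re_neg_of_delay_root {b δ κ τ : ℝ} (hb : 0 ≤ b) (hτ : 0 ≤ τ)
    (hcond : b * Real.exp (-κ * τ) < δ) {s : ℂ}
    (hs : s + δ - (b : ℂ) * Complex.exp (-((κ : ℂ) + s) * (τ : ℂ)) = 0) :
    s.re < 0 := by
  by_contra! hre
  have hδ_le : δ ≤ ‖s + δ‖ := by
    calc δ ≤ (s + δ).re := by simpa using hre
      _ ≤ ‖s + δ‖ := Complex.re_le_norm _
  rw [sub_eq_zero.1 hs] at hδ_le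
  linarith [Complex.norm_ofReal_mul_exp_delay_le (κ := κ) hb hτ hre]

theorem stmt_7_general (μ g γ δ δ0 T P1 a d : ℝ)
    (hμ : 0 < μ) (hg : 0 < g) (hγ : 0 < γ) (hδ0 : 0 < δ0) (hT : 0 < T)
    (hP1 : 0 < P1) (ha : 0 < a) (hd : 0 ≤ d)
    (hcond : γ * g * d * Real.exp (-δ0 * T) < δ)
    (s : ℂ)
    (hs : (s + ((μ * P1 * a : ℝ) : ℂ)) * (s + ((δ0 : ℝ) : ℂ)) *
        (s + ((δ : ℝ) : ℂ) - ((γ * g * d : ℝ) : ℂ) *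
          Complex.exp (-(((δ0 : ℝ) : ℂ) + s) * ((T : ℝ) : ℂ))) = 0) :
    s.re < 0 := by
  rcases mul_eq_zero.1 hs with hs | hdelay
  · rcases mul_eq_zero.1 hs with hroot₁ | hroot₂
    · exact Complex.re_neg_of_add_ofReal_eq_zero (by positivity) hroot₁
    · exact Complex.re_neg_of_add_ofReal_eq_zero hδ0 hroot₂
  · exact Complex.re_neg_of_delay_root (by positivity) hT.le hcond hdelay

/-- Every complex root of the characteristic equation of the NPZ system linearized about
the phytoplankton-only equilibrium `E₁`,
`(s + μP₁*a)(s + δ0)(s + δ − γgd e^{−(δ0+s)T}) = 0`,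
has negative real part, provided `γ g d e^{−δ0 T} < δ`. -/
theorem stmt_7 (μ g γ δ δ0 T P1 a d : ℝ)
    (hμ : 0 < μ) (hg : 0 < g) (hγ : 0 < γ) (hδ : 0 < δ) (hδ0 : 0 < δ0) (hT : 0 < T)
    (hP1 : 0 < P1) (ha : 0 < a) (hd : 0 ≤ d)
    (hcond : γ * g * d * Real.exp (-δ0 * T) < δ)
    (s : ℂ)
    (hs : (s + ((μ * P1 * a : ℝ) : ℂ)) * (s + ((δ0 : ℝ) : ℂ)) *
        (s + ((δ : ℝ) : ℂ) - ((γ * g * d : ℝ) : ℂ) *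
          Complex.exp (-(((δ0 : ℝ) : ℂ) + s) * ((T : ℝ) : ℂ))) = 0) :
    s.re < 0 :=
  stmt_7_general μ g γ δ δ0 T P1 a d hμ hg hγ hδ0 hT hP1 ha hd hcond s hs
end

section
/- Let P : ℝ → ℝ be continuous with R(P(u)) > 0 for all u, let R* > 0, define σ(t) := (1/R*)∫₀^t R(P(u)) du, and suppose σ : ℝ → ℝ is a bijection with inverse σ⁻¹ (which holds e.g. when R∘P is bounded above and bounded below by a positive constant); write P̂ := P ∘ σ⁻¹. Let s ≥ 0, t ∈ ℝ, and let τ ≥ 0 satisfy ∫_{t−τ}^{t} R(P(u)) du = s. Then τ = ∫_{σ(t)−s/R*}^{σ(t)} R*/R(P̂(r)) dr; that is, the threshold delay has the explicit representation τ̂(s, P̂_{t̂}) = ∫_{t̂−s/R*}^{t̂} R*/R(P̂(r)) dr with t̂ = σ(t). -/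
open Real Set Filter Topology

/-!
The clock `σ` has derivative `σ' = R(P(·))/R*`, which is continuous and positive, so `σ` is a
strictly increasing homeomorphism of `ℝ` and, by the inverse function theorem, `σ⁻¹` has derivative
`1/σ'(σ⁻¹ r) = R*/R(P̂(r))`. Integrating this derivative over `[σ(t − τ), σ(t)]` gives
`σ⁻¹(σ t) − σ⁻¹(σ(t − τ)) = τ`, and the threshold condition says exactly `σ(t − τ) = σ t − s/R*`.
-/

theorem StrictMono.continuous_of_rightInverse {σ σinv : ℝ → ℝ} (hσ : StrictMono σ)
    (hrinv : Function.RightInverse σinv σ) : Continuous σinv :=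
  (hσ.orderIsoOfRightInverse σ σinv hrinv).symm.continuous

theorem hasDerivAt_rightInverse_of_deriv_pos {σ σ' σinv : ℝ → ℝ}
    (hσ : ∀ x, HasDerivAt σ (σ' x) x) (hσ'_pos : ∀ x, 0 < σ' x)
    (hrinv : Function.RightInverse σinv σ) (r : ℝ) : HasDerivAt σinv (σ' (σinv r))⁻¹ r := by
  have hcont := (strictMono_of_hasDerivAt_pos hσ hσ'_pos).continuous_of_rightInverse hrinv
  exact (hσ (σinv r)).of_local_left_inverse hcont.continuousAt (hσ'_pos _).ne'
    (Eventually.of_forall hrinv)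

theorem integral_inv_deriv_comp_rightInverse {σ σ' σinv : ℝ → ℝ}
    (hσ : ∀ x, HasDerivAt σ (σ' x) x) (hσ'_pos : ∀ x, 0 < σ' x) (hσ'_cont : Continuous σ')
    (hrinv : Function.RightInverse σinv σ) (hlinv : Function.LeftInverse σinv σ) (a b : ℝ) :
    ∫ r in σ a..σ b, (σ' (σinv r))⁻¹ = b - a := by
  have hcont := (strictMono_of_hasDerivAt_pos hσ hσ'_pos).continuous_of_rightInverse hrinv
  have hint : Continuous fun r => (σ' (σinv r))⁻¹ :=
    (hσ'_cont.comp hcont).inv₀ fun r => (hσ'_pos _).ne'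
  rw [intervalIntegral.integral_eq_sub_of_hasDerivAt
    (fun r _ => hasDerivAt_rightInverse_of_deriv_pos hσ hσ'_pos hrinv r)
    (hint.intervalIntegrable _ _), hlinv a, hlinv b]

theorem stmt_10_general (R P : ℝ → ℝ) (Rstar : ℝ) (hRstar : 0 < Rstar)
    (hR : Continuous R) (hP : Continuous P) (hRP : ∀ u : ℝ, 0 < R (P u))
    (σ σinv : ℝ → ℝ) (hσ : ∀ t : ℝ, σ t = (1 / Rstar) * ∫ u in (0 : ℝ)..t, R (P u))
    (hlinv : Function.LeftInverse σinv σ) (hrinv : Function.RightInverse σinv σ)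
    (s t τ : ℝ)
    (hthr : ∫ u in (t - τ)..t, R (P u) = s) :
    τ = ∫ r in (σ t - s / Rstar)..(σ t), Rstar / R (P (σinv r)) := by
  have hRP_cont : Continuous fun u => R (P u) := hR.comp hP
  have hderiv : ∀ x, HasDerivAt σ (R (P x) / Rstar) x := fun x => by
    rw [funext hσ]
    exact ((hRP_cont.integral_hasStrictDerivAt 0 x).hasDerivAt.const_mul _).congr_deriv (by ring)
  have hσ_sub : σ (t - τ) = σ t - s / Rstar := by
    rw [hσ, hσ, ← intervalIntegral.integral_add_adjacent_intervals
      (hRP_cont.intervalIntegrable 0 (t - τ)) (hRP_cont.intervalIntegrable (t - τ) t), hthr]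
    ring
  have hclock := integral_inv_deriv_comp_rightInverse hderiv (fun x => div_pos (hRP x) hRstar)
    (hRP_cont.div_const Rstar) hrinv hlinv (t - τ) t
  simp only [inv_div] at hclock
  rw [← hσ_sub, hclock]
  ring

/-- Explicit representation of the threshold delay after Smith's time transformation:
if `∫_{t−τ}^t R(P(u)) du = s` then `τ = ∫_{σ(t)−s/R*}^{σ(t)} R*/R(P̂(r)) dr`,
where `σ(t) = (1/R*)∫₀^t R(P(u)) du` and `P̂ = P ∘ σ⁻¹`. -/
theorem stmt_10 (R P : ℝ → ℝ) (Rstar : ℝ) (hRstar : 0 < Rstar)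
    (hR : Continuous R) (hP : Continuous P) (hRP : ∀ u : ℝ, 0 < R (P u))
    (σ σinv : ℝ → ℝ) (hσ : ∀ t : ℝ, σ t = (1 / Rstar) * ∫ u in (0 : ℝ)..t, R (P u))
    (hbij : Function.Bijective σ)
    (hlinv : Function.LeftInverse σinv σ) (hrinv : Function.RightInverse σinv σ)
    (s t τ : ℝ) (hs : 0 ≤ s) (hτ : 0 ≤ τ)
    (hthr : ∫ u in (t - τ)..t, R (P u) = s) :
    τ = ∫ r in (σ t - s / Rstar)..(σ t), Rstar / R (P (σinv r)) :=
  stmt_10_general R P Rstar hRstar hR hP hRP σ σinv hσ hlinv hrinv s t τ hthr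
end

section
/- Suppose δ0 > 0 and let P₀ := h⁻¹(δ/(γg)) > 0. Define F(P) := (R(P)/δ0) ln(γg h(P)/δ) for P ≥ P₀. Then F is continuous and strictly increasing on [P₀, ∞), F(P₀) = 0, and F(P) → R_∞ ln(γg/δ)/δ0 as P → ∞ with F(P) < R_∞ ln(γg/δ)/δ0 for all P. Consequently, for every m with 0 ≤ m < R_∞ ln(γg/δ)/δ0 there exists a unique P₂* ≥ P₀ satisfying m = (R(P₂*)/δ0) ln(γg h(P₂*)/δ), there is no solution for m ≥ R_∞ ln(γg/δ)/δ0, P₂* = P₀ when m = 0, and P₂* is strictly increasing as a function of m. -/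
open Real Set Filter Topology

/-! `F` is the product of the positive nondecreasing factor `R / δ0` with the nonnegative, strictly
increasing factor `log (γ g h / δ)`, which vanishes at `P₀`; hence `F` is strictly increasing on
`[P₀, ∞)`. A strictly increasing function stays strictly below its limit, and a continuous one
takes every value between its initial value and its limit, so `F` is a bijection from `[P₀, ∞)`
onto `[0, R_∞ log (γ g / δ) / δ0)`. -/

theorem MonotoneOn.mul_strictMonoOn_of_pos {α : Type*} [Preorder α] {s : Set α}
    {u v : α → ℝ} (hu : MonotoneOn u s) (hv : StrictMonoOn v s) (hu_pos : ∀ x ∈ s, 0 < u x)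
    (hv_nonneg : ∀ x ∈ s, 0 ≤ v x) : StrictMonoOn (fun x => u x * v x) s :=
  fun _ hx _ hy hxy =>
    mul_lt_mul' (hu hx hy hxy.le) (hv hx hy hxy) (hv_nonneg _ hx) (hu_pos _ hy)

theorem StrictMonoOn.lt_of_tendsto_atTop {α β : Type*} [LinearOrder α] [NoMaxOrder α]
    [TopologicalSpace β] [Preorder β] [OrderClosedTopology β] {f : α → β} {a : α} {L : β}
    (hf : StrictMonoOn f (Ici a)) (hfL : Tendsto f atTop (𝓝 L)) {x : α} (hx : a ≤ x) :
    f x < L := by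
  have : Nonempty α := ⟨a⟩
  obtain ⟨y, hxy⟩ := exists_gt x
  refine (hf hx (hx.trans hxy.le) hxy).trans_le (ge_of_tendsto hfL ?_)
  filter_upwards [eventually_ge_atTop y] with z hyz
  exact hf.monotoneOn (hx.trans hxy.le) (hx.trans (hxy.le.trans hyz)) hyz

section IntermediateValue

variable {α δ : Type*} [ConditionallyCompleteLinearOrder α] [DenselyOrdered α]
  [TopologicalSpace α] [OrderTopology α] [LinearOrder δ] [TopologicalSpace δ]
  [OrderClosedTopology δ] {f : α → δ} {a : α} {L : δ}

theorem intermediate_value_Ici_of_tendsto_nhds (hf : ContinuousOn f (Ici a))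
    (hfL : Tendsto f atTop (𝓝 L)) : Ico (f a) L ⊆ f '' Ici a := by
  rintro m ⟨ham, hmL⟩
  have : Nonempty α := ⟨a⟩
  obtain ⟨b, hab, hmb⟩ := ((eventually_ge_atTop a).and (hfL.eventually_const_lt hmL)).exists
  exact hf.surjOn_Icc self_mem_Ici hab ⟨ham, hmb.le⟩

theorem StrictMonoOn.existsUnique_eq_of_tendsto (hmono : StrictMonoOn f (Ici a))
    (hf : ContinuousOn f (Ici a)) (hfL : Tendsto f atTop (𝓝 L)) {m : δ}
    (hm : m ∈ Ico (f a) L) : ∃! x, a ≤ x ∧ f x = m := by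
  obtain ⟨x, hx, rfl⟩ := intermediate_value_Ici_of_tendsto_nhds hf hfL hm
  exact ⟨x, ⟨hx, rfl⟩, fun y ⟨hy, hxy⟩ => hmono.injOn hy hx hxy⟩

end IntermediateValue

theorem stmt_12_general (h R : ℝ → ℝ) (g δ δ0 γ Rinf P0 : ℝ)
    (hhc : Continuous h) (hhmono : StrictMonoOn h (Ici 0))
    (hhtop : Tendsto h atTop (𝓝 1))
    (hRc : Continuous R) (hRmono : MonotoneOn R (Ici 0))
    (hRpos : ∀ P > (0 : ℝ), 0 < R P) (hRtop : Tendsto R atTop (𝓝 Rinf))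
    (hδ : 0 < δ) (hδ0 : 0 < δ0) (hγg : δ < γ * g)
    (hP0 : 0 < P0) (hP0h : h P0 = δ / (γ * g))
    (F : ℝ → ℝ) (hF : ∀ P : ℝ, F P = R P / δ0 * Real.log (γ * g * h P / δ)) :
    ContinuousOn F (Ici P0) ∧
    StrictMonoOn F (Ici P0) ∧
    F P0 = 0 ∧
    Tendsto F atTop (𝓝 (Rinf * Real.log (γ * g / δ) / δ0)) ∧
    (∀ P ≥ P0, F P < Rinf * Real.log (γ * g / δ) / δ0) ∧
    (∀ m : ℝ, 0 ≤ m → m < Rinf * Real.log (γ * g / δ) / δ0 →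
      ∃! P2 : ℝ, P0 ≤ P2 ∧ F P2 = m) ∧
    (∀ m : ℝ, Rinf * Real.log (γ * g / δ) / δ0 ≤ m → ¬ ∃ P2 : ℝ, P0 ≤ P2 ∧ F P2 = m) ∧
    (∀ P2 : ℝ, P0 ≤ P2 → F P2 = 0 → P2 = P0) ∧
    (∀ m1 m2 P1 P2 : ℝ, 0 ≤ m1 → m1 < m2 → m2 < Rinf * Real.log (γ * g / δ) / δ0 →
      P0 ≤ P1 → P0 ≤ P2 → F P1 = m1 → F P2 = m2 → P1 < P2) := by
  have hγg_pos : 0 < γ * g := hδ.trans hγg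
  have hIci : Ici P0 ⊆ Ici 0 := Ici_subset_Ici.2 hP0.le
  have harg_mono : StrictMonoOn (fun P => γ * g * h P / δ) (Ici P0) := fun _ hx _ hy hxy =>
    div_lt_div_of_pos_right (mul_lt_mul_of_pos_left (hhmono (hIci hx) (hIci hy) hxy) hγg_pos) hδ
  have harg_P0 : γ * g * h P0 / δ = 1 := by
    rw [hP0h, mul_div_cancel₀ _ hγg_pos.ne', div_self hδ.ne']
  have harg_ge : ∀ P ∈ Ici P0, 1 ≤ γ * g * h P / δ := fun P hP =>
    harg_P0 ▸ harg_mono.monotoneOn self_mem_Ici hP hP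
  have hlog_mono : StrictMonoOn (fun P => Real.log (γ * g * h P / δ)) (Ici P0) :=
    strictMonoOn_log.comp harg_mono fun P hP => zero_lt_one.trans_le (harg_ge P hP)
  have hFmono : StrictMonoOn F (Ici P0) := by
    rw [funext hF]
    refine MonotoneOn.mul_strictMonoOn_of_pos (fun x hx y hy hxy => ?_) hlog_mono
      (fun P hP => div_pos (hRpos P (hP0.trans_le hP)) hδ0) (fun P hP => log_nonneg (harg_ge P hP))
    exact div_le_div_of_nonneg_right (hRmono (hIci hx) (hIci hy) hxy) hδ0.le
  have hFcont : ContinuousOn F (Ici P0) := by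
    rw [funext hF]
    refine (hRc.div_const δ0).continuousOn.mul ?_
    exact ((continuous_const.mul hhc).div_const δ).continuousOn.log
      fun P hP => (zero_lt_one.trans_le (harg_ge P hP)).ne'
  have hFP0 : F P0 = 0 := by rw [hF, harg_P0, log_one, mul_zero]
  have hFtop : Tendsto F atTop (𝓝 (Rinf * Real.log (γ * g / δ) / δ0)) := by
    rw [funext hF, mul_div_right_comm]
    refine (hRtop.div_const δ0).mul (Tendsto.log ?_ (div_pos hγg_pos hδ).ne')
    simpa using (hhtop.const_mul (γ * g)).div_const δ
  have hFlt : ∀ P ≥ P0, F P < Rinf * Real.log (γ * g / δ) / δ0 := fun _ hP =>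
    hFmono.lt_of_tendsto_atTop hFtop hP
  refine ⟨hFcont, hFmono, hFP0, hFtop, hFlt, fun m hm hmL => ?_, ?_, ?_, ?_⟩
  · exact hFmono.existsUnique_eq_of_tendsto hFcont hFtop ⟨hFP0 ▸ hm, hmL⟩
  · rintro m hm ⟨P, hP, rfl⟩
    exact (hFlt P hP).not_ge hm
  · exact fun P hP hFP => hFmono.injOn hP self_mem_Ici (hFP.trans hFP0.symm)
  · rintro m1 m2 P1 P2 - h12 - hP1 hP2 rfl rfl
    exact (hFmono.lt_iff_lt hP1 hP2).1 h12

/-- Existence, uniqueness and monotonicity of the coexistence-equilibrium phytoplankton level: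
`F(P) = (R(P)/δ0) ln(γg h(P)/δ)` is continuous and strictly increasing on `[P₀,∞)` with
`F(P₀) = 0`, tends to `R_∞ ln(γg/δ)/δ0` (never attaining it), so for each
`0 ≤ m < R_∞ ln(γg/δ)/δ0` there is a unique `P₂* ≥ P₀` with `F(P₂*) = m`, no solution for
larger `m`, `P₂* = P₀` at `m = 0`, and `P₂*` strictly increasing in `m`. -/
theorem stmt_12 (h R : ℝ → ℝ) (g δ δ0 γ Rinf P0 : ℝ)
    (hhc : Continuous h) (hhmono : StrictMonoOn h (Ici 0)) (hh0 : h 0 = 0)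
    (hhtop : Tendsto h atTop (𝓝 1))
    (hRc : Continuous R) (hRmono : MonotoneOn R (Ici 0))
    (hRpos : ∀ P > (0 : ℝ), 0 < R P) (hRtop : Tendsto R atTop (𝓝 Rinf))
    (hg : 0 < g) (hδ : 0 < δ) (hδ0 : 0 < δ0) (hγ : γ ∈ Ioc (0 : ℝ) 1) (hγg : δ < γ * g)
    (hP0 : 0 < P0) (hP0h : h P0 = δ / (γ * g))
    (F : ℝ → ℝ) (hF : ∀ P : ℝ, F P = R P / δ0 * Real.log (γ * g * h P / δ)) :
    ContinuousOn F (Ici P0) ∧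
    StrictMonoOn F (Ici P0) ∧
    F P0 = 0 ∧
    Tendsto F atTop (𝓝 (Rinf * Real.log (γ * g / δ) / δ0)) ∧
    (∀ P ≥ P0, F P < Rinf * Real.log (γ * g / δ) / δ0) ∧
    (∀ m : ℝ, 0 ≤ m → m < Rinf * Real.log (γ * g / δ) / δ0 →
      ∃! P2 : ℝ, P0 ≤ P2 ∧ F P2 = m) ∧
    (∀ m : ℝ, Rinf * Real.log (γ * g / δ) / δ0 ≤ m → ¬ ∃ P2 : ℝ, P0 ≤ P2 ∧ F P2 = m) ∧
    (∀ P2 : ℝ, P0 ≤ P2 → F P2 = 0 → P2 = P0) ∧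
    (∀ m1 m2 P1 P2 : ℝ, 0 ≤ m1 → m1 < m2 → m2 < Rinf * Real.log (γ * g / δ) / δ0 →
      P0 ≤ P1 → P0 ≤ P2 → F P1 = m1 → F P2 = m2 → P1 < P2) :=
  stmt_12_general h R g δ δ0 γ Rinf P0 hhc hhmono hhtop hRc hRmono hRpos hRtop hδ hδ0 hγg hP0 hP0h F
    hF
end

section
/- Let K : ℝⁿ → ℝ be continuously differentiable, x* ∈ ℝⁿ with K(x*) > 0, m > 0, τ* := m/K(x*), and r > τ*. Let x̄* denote the constant function with value x* in C([−r,0], ℝⁿ) equipped with the supremum norm. Suppose U is a neighborhood of x̄* and τ : U → (0, r) satisfies the threshold condition ∫_{−τ(φ)}^{0} K(φ(u)) du = m for all φ ∈ U, with τ(x̄*) = τ* and τ continuous at x̄*. Then lim_{h→0} |τ(x̄* + h) − τ* + (1/K(x*)) ∫_{−τ*}^{0} DK(x*)(h(u)) du| / ‖h‖_∞ = 0; that is, τ is Fréchet differentiable at x̄* with derivative Dτ(x̄*)h = −(1/K(x*)) ∫_{−τ*}^{0} DK(x*)(h(u)) du. -/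
open Real Set Filter Topology Asymptotics

/-!
Write `x̄* + h` for a perturbed history, `T = τ(x̄* + h)` and `c = K(x*)`. Subtracting `τ* c = m` from
the threshold condition `∫_{-T}^0 K(x* + h) = m` gives
`c (T - τ* + c⁻¹ ∫_{-τ*}^0 DK(x*) h) = -(∫_{-T}^0 R(h) + ∫_{-T}^{-τ*} DK(x*) h)`, where
`R(v) = K(x* + v) - K(x*) - DK(x*) v` is the first-order remainder of `K` at `x*`.
Since `‖h(u)‖ ≤ ‖h‖_∞` for every `u`, the first integral is `o(‖h‖)` over the bounded
interval `[-T, 0]`, and the second is `O(‖h‖ |T - τ*|) = o(‖h‖)` because `τ` is continuous at `x̄*`.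
-/

section

variable {E F : Type*} [NormedAddCommGroup E] [NormedAddCommGroup F]

theorem Asymptotics.IsBigOWith.eventually_forall_norm_comp_le {X : Type*} [TopologicalSpace X]
    [CompactSpace X] {f : E → F} {c : ℝ} (hc : 0 ≤ c) (hf : IsBigOWith c (𝓝 0) f fun v => v) :
    ∀ᶠ h in 𝓝 (0 : C(X, E)), ∀ x, ‖f (h x)‖ ≤ c * ‖h‖ := by
  obtain ⟨δ, hδ, hball⟩ := Metric.eventually_nhds_iff_ball.1 hf.bound
  filter_upwards [Metric.ball_mem_nhds 0 hδ] with h hh x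
  have hx : ‖h x‖ ≤ ‖h‖ := h.norm_coe_le_norm x
  calc ‖f (h x)‖ ≤ c * ‖h x‖ := hball _ (by simpa using hx.trans_lt (by simpa using hh))
    _ ≤ c * ‖h‖ := by gcongr

variable [NormedSpace ℝ F] {a b : ℝ} (hab : a ≤ b) {f : E → F} (α β : C(Icc a b, E) → ℝ)
include hab

theorem Asymptotics.IsBigOWith.intervalIntegral_comp {c : ℝ} (hc : 0 ≤ c)
    (hf : IsBigOWith c (𝓝 0) f fun v => v) :
    IsBigOWith c (𝓝 0) (fun h => ∫ u in (α h)..(β h), f (h (projIcc a b hab u)))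
      (fun h => ‖h‖ * (β h - α h)) := by
  refine .of_bound ?_
  filter_upwards [hf.eventually_forall_norm_comp_le hc] with h hh
  calc ‖∫ u in (α h)..(β h), f (h (projIcc a b hab u))‖ ≤ c * ‖h‖ * |β h - α h| :=
        intervalIntegral.norm_integral_le_of_norm_le_const fun u _ => hh _
    _ = c * ‖‖h‖ * (β h - α h)‖ := by rw [norm_mul, _root_.norm_norm, Real.norm_eq_abs, mul_assoc]

theorem Asymptotics.IsLittleO.intervalIntegral_comp (hf : f =o[𝓝 0] fun v => v) :
    (fun h => ∫ u in (α h)..(β h), f (h (projIcc a b hab u))) =o[𝓝 0]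
      fun h => ‖h‖ * (β h - α h) :=
  .of_isBigOWith fun _ hc => (hf.forall_isBigOWith hc).intervalIntegral_comp hab α β hc.le

end

theorem threshold_linearization_identity {E : Type*} [NormedAddCommGroup E] [NormedSpace ℝ E]
    {K : E → ℝ} (K' : E →L[ℝ] ℝ) {x : E} {p : ℝ → E}
    (hp : Continuous p) {m τs T : ℝ} (hc : K x ≠ 0) (hτs : τs = m / K x)
    (hint : IntervalIntegrable (fun u => K (x + p u)) MeasureTheory.volume (-T) 0)
    (hthr : ∫ u in (-T)..0, K (x + p u) = m) :
    T - τs + 1 / K x * ∫ u in (-τs)..0, K' (p u) =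
      -(1 / K x) * ((∫ u in (-T)..0, K (x + p u) - K x - K' (p u)) +
        ∫ u in (-T)..(-τs), K' (p u)) := by
  have hK'p : Continuous fun u => K' (p u) := K'.continuous.comp hp
  rw [intervalIntegral.integral_sub (hint.sub intervalIntegrable_const) (hK'p.intervalIntegrable _ _),
    intervalIntegral.integral_sub hint intervalIntegrable_const, hthr, intervalIntegral.integral_const,
    ← intervalIntegral.integral_add_adjacent_intervals (hK'p.intervalIntegrable (-T) (-τs))
      (hK'p.intervalIntegrable (-τs) 0), hτs]
  field_simp
  ring

/-- Fréchet differentiability of the state-dependent threshold delay at a constant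
(equilibrium) state: if `τ(φ)` is defined by the threshold condition
`∫_{−τ(φ)}^0 K(φ(u)) du = m` for `φ` near the constant history `x̄*`, then
`τ(x̄* + h) − τ* = −(1/K(x*)) ∫_{−τ*}^0 DK(x*)(h(u)) du + o(‖h‖)`. -/
theorem stmt_14 (n : ℕ) (K : EuclideanSpace ℝ (Fin n) → ℝ)
    (xs : EuclideanSpace ℝ (Fin n)) (hKx : 0 < K xs)
    (K' : EuclideanSpace ℝ (Fin n) →L[ℝ] ℝ) (hK' : HasFDerivAt K K' xs)
    (m r τs : ℝ) (hm : 0 < m) (hτs : τs = m / K xs) (hr0 : 0 < r)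
    (U : Set C(Icc (-r) (0 : ℝ), EuclideanSpace ℝ (Fin n)))
    (hU : U ∈ 𝓝 (ContinuousMap.const (Icc (-r) (0 : ℝ)) xs))
    (τ : C(Icc (-r) (0 : ℝ), EuclideanSpace ℝ (Fin n)) → ℝ)
    (hτthr : ∀ φ ∈ U,
      (∫ u in (-(τ φ))..(0 : ℝ), K (φ (Set.projIcc (-r) 0 (by linarith) u))) = m)
    (hτeq : τ (ContinuousMap.const (Icc (-r) (0 : ℝ)) xs) = τs)
    (hτcont : ContinuousAt τ (ContinuousMap.const (Icc (-r) (0 : ℝ)) xs)) :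
    Tendsto
      (fun hfun : C(Icc (-r) (0 : ℝ), EuclideanSpace ℝ (Fin n)) =>
        |τ (ContinuousMap.const (Icc (-r) (0 : ℝ)) xs + hfun) - τs +
            (1 / K xs) *
              ∫ u in (-τs)..(0 : ℝ), K' (hfun (Set.projIcc (-r) 0 (by linarith) u))| /
          ‖hfun‖)
      (𝓝[≠] 0) (𝓝 0) := by
  have hr : -r ≤ 0 := by linarith
  set φ₀ := ContinuousMap.const (Icc (-r) (0 : ℝ)) xs
  have hshift : Tendsto (fun h => φ₀ + h) (𝓝 0) (𝓝 φ₀) := by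
    simpa using (continuous_const_add φ₀).tendsto 0
  have hT : Tendsto (fun h => τ (φ₀ + h)) (𝓝 0) (𝓝 τs) := hτeq ▸ hτcont.tendsto.comp hshift
  have hlen_bdd : (fun h => ‖h‖ * (0 - -τ (φ₀ + h))) =O[𝓝 0] fun h => ‖h‖ := by
    simpa using (isBigO_refl (fun h => ‖h‖) _).mul (hT.isBigO_one ℝ)
  have hlen_small : (fun h => ‖h‖ * (-τs - -τ (φ₀ + h))) =o[𝓝 0] fun h => ‖h‖ := by
    simpa using (isBigO_refl (fun h => ‖h‖) _).mul_isLittleO ((isLittleO_one_iff ℝ).2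
      (by simpa using tendsto_const_nhds (x := -τs) |>.sub hT.neg))
  have hA := ((hasFDerivAt_iff_isLittleO_nhds_zero.1 hK').intervalIntegral_comp hr
    (fun h => -τ (φ₀ + h)) (fun _ => 0)).trans_isBigO hlen_bdd
  have hB := ((K'.isBigOWith_id (𝓝 0)).intervalIntegral_comp hr
    (fun h => -τ (φ₀ + h)) (fun _ => -τs) (norm_nonneg _)).isBigO.trans_isLittleO hlen_small
  have hidentity : ∀ᶠ h in 𝓝 (0 : C(Icc (-r) (0 : ℝ), EuclideanSpace ℝ (Fin n))), _ :=
    (hshift.eventually_mem hU).mono fun h hφ => by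
      have hthr := hτthr _ hφ
      simp only [φ₀, ContinuousMap.add_apply, ContinuousMap.const_apply] at hthr
      -- the threshold integral is nonzero, hence its integrand is integrable
      exact threshold_linearization_identity K' (h.continuous.comp continuous_projIcc) hKx.ne' hτs
        (intervalIntegral.intervalIntegrable_of_integral_ne_zero (hthr ▸ hm.ne')) hthr
  have hlittle := ((hA.add hB).const_mul_left (-(1 / K xs))).congr'
    (hidentity.mono fun _ h => h.symm) EventuallyEq.rfl
  exact (isLittleO_abs_left.2 hlittle).tendsto_div_nhds_zero.mono_left nhdsWithin_le_nhds
end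

section
/- Let P, Z : [−t0, ∞) → ℝ be continuously differentiable with P(t) > 0 for all t, and for s ≥ 0 and t with ∫_{−t0}^{t} R(P(u)) du ≥ s let τ(s,t) ≥ 0 be defined by ∫_{t−τ(s,t)}^{t} R(P(u)) du = s. Define ρ(t,s) := e^{−δ0 τ(s,t)} γg Z(t−τ(s,t)) h(P(t−τ(s,t))) / R(P(t−τ(s,t))). Then ρ has partial derivatives ∂ρ/∂t and ∂ρ/∂s on its domain and satisfies the transport equation ∂ρ/∂t(t,s) + R(P(t)) ∂ρ/∂s(t,s) = −δ0 ρ(t,s), together with the boundary condition R(P(t)) ρ(t,0) = γg Z(t) h(P(t)). -/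
/-!
Let `G t = ∫_{-t0}^{t} R(P u) du`, a strictly increasing primitive with `G' = R ∘ P > 0`.
The threshold condition says `G (t - τ s t) = G t - s`, so the foot `a(t,s) = t - τ s t` of the
characteristic is `G⁻¹ (G t - s)`; implicit differentiation gives `a_t = R(P t) / R(P a)` and
`a_s = -1 / R(P a)`, hence `a_t + R(P t) a_s = 0`. Writing `ρ(t,s) = e^{-δ0 t} F(a(t,s))` with
`F x = e^{δ0 x} γ g Z x h(P x) / R(P x)`, the transport equation follows from the chain rule, and
the boundary condition from `τ 0 t = 0`.
-/

open Real Filter Topology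

-- Implicit differentiation: near `y`, `a` is the local inverse of `G` composed with `q`.
theorem HasStrictDerivAt.hasDerivAt_of_comp_eventuallyEq {G a q : ℝ → ℝ} {G' q' y : ℝ}
    (hG : HasStrictDerivAt G G' (a y)) (hG' : G' ≠ 0) (hinj : Function.Injective G)
    (hq : HasDerivAt q q' y) (hGa : ∀ᶠ y' in 𝓝 y, G (a y') = q y') :
    HasDerivAt a (G'⁻¹ * q') y := by
  set V := hG.localInverse G G' (a y) hG'
  have hqy : G (a y) = q y := hGa.self_of_nhds
  have hV : HasDerivAt V G'⁻¹ (q y) := hqy ▸ (hG.to_localInverse hG').hasDerivAt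
  have hright : ∀ᶠ y' in 𝓝 y, G (V (q y')) = q y' :=
    hq.continuousAt.eventually (hqy ▸ hG.eventually_right_inverse hG')
  have ha : a =ᶠ[𝓝 y] V ∘ q := by
    filter_upwards [hGa, hright] with y' h1 h2
    exact hinj (h1.trans h2.symm)
  exact (hV.comp y hq).congr_of_eventuallyEq ha

theorem strictMono_integral_of_pos {r : ℝ → ℝ} (c : ℝ) (hr : Continuous r)
    (hpos : ∀ x, 0 < r x) : StrictMono fun t => ∫ u in c..t, r u :=
  strictMono_of_deriv_pos fun x => by
    rw [(hr.integral_hasStrictDerivAt c x).hasDerivAt.deriv]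
    exact hpos x

theorem integral_eq_sub_of_integral_eq {r : ℝ → ℝ} {a c s t : ℝ} (hr : Continuous r)
    (h : ∫ u in a..t, r u = s) : ∫ u in c..a, r u = (∫ u in c..t, r u) - s :=
  eq_sub_of_add_eq <| h ▸ intervalIntegral.integral_add_adjacent_intervals
    (hr.intervalIntegrable _ _) (hr.intervalIntegrable _ _)

theorem exists_hasDerivAt_transport {a : ℝ → ℝ → ℝ} {F : ℝ → ℝ} {t s c δ dt ds F' : ℝ}
    (ht : HasDerivAt (fun t' => a t' s) dt t) (hs : HasDerivAt (fun s' => a t s') ds s)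
    (hchar : dt + c * ds = 0) (hF : HasDerivAt F F' (a t s)) :
    ∃ ρt ρs : ℝ,
      HasDerivAt (fun t' => exp (-δ * t') * F (a t' s)) ρt t ∧
      HasDerivAt (fun s' => exp (-δ * t) * F (a t s')) ρs s ∧
      ρt + c * ρs = -δ * (exp (-δ * t) * F (a t s)) := by
  have hexp : HasDerivAt (fun t' => exp (-δ * t')) (exp (-δ * t) * (-δ * 1)) t :=
    ((hasDerivAt_id t).const_mul (-δ)).exp
  refine ⟨_, _, hexp.mul (hF.comp t ht), (hF.comp s hs).const_mul (exp (-δ * t)), ?_⟩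
  linear_combination exp (-δ * t) * F' * hchar

theorem exists_hasDerivAt_transport_of_foot {G r F : ℝ → ℝ} {a : ℝ → ℝ → ℝ} {δ t s F' : ℝ}
    (hG : ∀ x, HasStrictDerivAt G (r x) x) (hr : ∀ x, r x ≠ 0) (hinj : Function.Injective G)
    (hft : ∀ᶠ t' in 𝓝 t, G (a t' s) = G t' - s) (hfs : ∀ᶠ s' in 𝓝 s, G (a t s') = G t - s')
    (hF : HasDerivAt F F' (a t s)) :
    ∃ ρt ρs : ℝ,
      HasDerivAt (fun t' => exp (-δ * t') * F (a t' s)) ρt t ∧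
      HasDerivAt (fun s' => exp (-δ * t) * F (a t s')) ρs s ∧
      ρt + r t * ρs = -δ * (exp (-δ * t) * F (a t s)) := by
  have ht := (hG (a t s)).hasDerivAt_of_comp_eventuallyEq (a := fun t' => a t' s) (hr _) hinj
    ((hG t).hasDerivAt.sub_const s) hft
  have hs := (hG (a t s)).hasDerivAt_of_comp_eventuallyEq (a := fun s' => a t s') (hr _) hinj
    ((hasDerivAt_id s).const_sub (G t)) hfs
  refine exists_hasDerivAt_transport ht hs ?_ hF
  ring

theorem stmt_18_general (h R : ℝ → ℝ) (g γ δ0 t0 : ℝ)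
    (hh : ContDiff ℝ 1 h) (hR : ContDiff ℝ 1 R) (hRpos : ∀ p > (0 : ℝ), 0 < R p)
    (P Z : ℝ → ℝ) (hP : ContDiff ℝ 1 P) (hZ : ContDiff ℝ 1 Z)
    (hPpos : ∀ t : ℝ, 0 < P t)
    (τ : ℝ → ℝ → ℝ)
    (hτ : ∀ s t : ℝ, 0 ≤ s → s ≤ ∫ u in (-t0)..t, R (P u) →
      0 ≤ τ s t ∧ ∫ u in (t - τ s t)..t, R (P u) = s)
    (ρ : ℝ → ℝ → ℝ)
    (hρ : ∀ t s : ℝ, ρ t s = Real.exp (-δ0 * τ s t) * γ * g * Z (t - τ s t)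
      * h (P (t - τ s t)) / R (P (t - τ s t))) :
    (∀ t s : ℝ, 0 < s → s < ∫ u in (-t0)..t, R (P u) →
      ∃ ρt ρs : ℝ,
        HasDerivAt (fun t' => ρ t' s) ρt t ∧
        HasDerivAt (fun s' => ρ t s') ρs s ∧
        ρt + R (P t) * ρs = -δ0 * ρ t s) ∧
    (∀ t : ℝ, 0 ≤ ∫ u in (-t0)..t, R (P u) →
      R (P t) * ρ t 0 = γ * g * Z t * h (P t)) := by
  have hr : Continuous fun u => R (P u) := hR.continuous.comp hP.continuous
  have hrpos : ∀ u, 0 < R (P u) := fun u => hRpos _ (hPpos u)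
  set G := fun t => ∫ u in (-t0)..t, R (P u)
  have hG : ∀ x, HasStrictDerivAt G (R (P x)) x := hr.integral_hasStrictDerivAt (-t0)
  have hGinj : Function.Injective G := (strictMono_integral_of_pos _ hr hrpos).injective
  have hfoot : ∀ s t, 0 ≤ s → s ≤ G t → G (t - τ s t) = G t - s := fun s t h0 h1 =>
    integral_eq_sub_of_integral_eq hr (hτ s t h0 h1).2
  have hF : Differentiable ℝ fun x => exp (δ0 * x) * (γ * g * Z x * h (P x) / R (P x)) := by
    have := hh.differentiable one_ne_zero
    have := hR.differentiable one_ne_zero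
    have := hP.differentiable one_ne_zero
    have := hZ.differentiable one_ne_zero
    fun_prop (disch := exact fun x => (hrpos x).ne')
  set F := fun x => exp (δ0 * x) * (γ * g * Z x * h (P x) / R (P x))
  have hρF : ρ = fun t s => exp (-δ0 * t) * F (t - τ s t) := by
    funext t s
    rw [hρ, show -δ0 * τ s t = -δ0 * t + δ0 * (t - τ s t) by ring, exp_add]
    ring
  refine ⟨fun t s hs0 hs1 => ?_, fun t ht => ?_⟩
  · subst hρF
    refine exists_hasDerivAt_transport_of_foot (a := fun t s => t - τ s t) hG
      (fun x => (hrpos x).ne') hGinj ?_ ?_ (hF _).hasDerivAt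
    · filter_upwards [(hG t).hasDerivAt.continuousAt.eventually (lt_mem_nhds hs1)] with t' h1
      exact hfoot s t' hs0.le h1.le
    · filter_upwards [eventually_gt_nhds hs0, eventually_lt_nhds hs1] with s' h0 h1
      exact hfoot s' t h0.le h1.le
  · have hτ0 : τ 0 t = 0 := by
      have := hGinj ((hfoot 0 t le_rfl ht).trans (sub_zero _))
      linarith
    rw [hρ, hτ0, mul_zero, exp_zero, sub_zero]
    field_simp [(hrpos t).ne']

/-- The formula obtained by the method of characteristics,
`ρ(t,s) = e^{−δ0 τ(s,t)} γg Z(t−τ(s,t)) h(P(t−τ(s,t))) / R(P(t−τ(s,t)))`,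
solves the maturity-structured juvenile-zooplankton transport equation
`ρ_t + R(P(t)) ρ_s = −δ0 ρ` with birth-rate boundary condition
`R(P(t)) ρ(t,0) = γg Z(t) h(P(t))`. -/
theorem stmt_18 (h R : ℝ → ℝ) (g γ δ0 t0 : ℝ)
    (hh : ContDiff ℝ 1 h) (hR : ContDiff ℝ 1 R) (hRpos : ∀ p > (0 : ℝ), 0 < R p)
    (hg : 0 < g) (hγ : 0 < γ) (hδ0 : 0 ≤ δ0)
    (P Z : ℝ → ℝ) (hP : ContDiff ℝ 1 P) (hZ : ContDiff ℝ 1 Z)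
    (hPpos : ∀ t : ℝ, 0 < P t)
    (τ : ℝ → ℝ → ℝ)
    (hτ : ∀ s t : ℝ, 0 ≤ s → s ≤ ∫ u in (-t0)..t, R (P u) →
      0 ≤ τ s t ∧ ∫ u in (t - τ s t)..t, R (P u) = s)
    (ρ : ℝ → ℝ → ℝ)
    (hρ : ∀ t s : ℝ, ρ t s = Real.exp (-δ0 * τ s t) * γ * g * Z (t - τ s t)
      * h (P (t - τ s t)) / R (P (t - τ s t))) :
    (∀ t s : ℝ, 0 < s → s < ∫ u in (-t0)..t, R (P u) →
      ∃ ρt ρs : ℝ,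
        HasDerivAt (fun t' => ρ t' s) ρt t ∧
        HasDerivAt (fun s' => ρ t s') ρs s ∧
        ρt + R (P t) * ρs = -δ0 * ρ t s) ∧
    (∀ t : ℝ, 0 ≤ ∫ u in (-t0)..t, R (P u) →
      R (P t) * ρ t 0 = γ * g * Z t * h (P t)) :=
  stmt_18_general h R g γ δ0 t0 hh hR hRpos P Z hP hZ hPpos τ hτ ρ hρ
end

section
/- Let (N, P, Z, ρ) be a classical solution of the full structured NPZ model (the PDE1 model) on [0, ∞) × [0, m], with N, P, Z continuously differentiable, ρ continuously differentiable in (t,s). Then the total biomass t ↦ N(t) + P(t) + Z(t) + ∫₀^m ρ(t,s) ds is constant in t; i.e., the system satisfies the conservation law N(t) + P(t) + Z(t) + ∫₀^m ρ(t,s) ds = N_T for all t ≥ 0, where N_T is its value at t = 0. -/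
open Set intervalIntegral MeasureTheory
open scoped Interval

/-! Integrating the transport equation over the maturity range `[0, m]` shows that the juvenile
biomass `∫₀^m ρ` changes by the inflow `R(P) ρ(t,0) = γ g Z h(P)` minus the outflow `R(P) ρ(t,m)`
(which enters `Z`) minus the loss `δ0 ∫₀^m ρ` (which enters `N`). Every term of the ODEs then
cancels in the derivative of the total biomass, which vanishes for `t > 0`; as the total is
continuous on `[0, ∞)`, the mean value theorem makes it constant. -/

section ParametricIntervalIntegral

variable {E : Type*} [NormedAddCommGroup E] [NormedSpace ℝ E] {a b : ℝ}

theorem continuousOn_intervalIntegral_of_continuousOn_prod {X : Type*} [TopologicalSpace X]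
    {F : X → ℝ → E} {K : Set X} (hab : a ≤ b)
    (hF : ContinuousOn (Function.uncurry F) (K ×ˢ Icc a b)) :
    ContinuousOn (fun x => ∫ s in a..b, F x s) K := by
  rw [continuousOn_iff_continuous_domRestrict]
  -- clamping `s` into `[a, b]` makes the integrand continuous on all of `K × ℝ`
  have hclamped : Continuous (Function.uncurry fun (x : K) s => F x (projIcc a b hab s)) :=
    hF.comp_continuous (f := fun p : K × ℝ => ((p.1 : X), (projIcc a b hab p.2 : ℝ)))
      (by fun_prop) fun p => ⟨p.1.2, Subtype.prop _⟩
  refine (continuous_parametric_intervalIntegral_of_continuous' (μ := volume) hclamped a b).congr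
    fun x => ?_
  refine integral_congr fun s hs => ?_
  rw [uIcc_of_le hab] at hs
  simp [projIcc_of_mem hab hs]

theorem hasDerivAt_intervalIntegral_of_continuousOn_prod {F F' : ℝ → ℝ → E} {U : Set ℝ}
    (hU : IsOpen U) (hab : a ≤ b)
    (hF : ContinuousOn (Function.uncurry F) (U ×ˢ Icc a b))
    (hF' : ContinuousOn (Function.uncurry F') (U ×ˢ Icc a b))
    (hderiv : ∀ t ∈ U, ∀ s ∈ Icc a b, HasDerivAt (fun t => F t s) (F' t s) t)
    {t₀ : ℝ} (ht₀ : t₀ ∈ U) :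
    HasDerivAt (fun t => ∫ s in a..b, F t s) (∫ s in a..b, F' t₀ s) t₀ := by
  obtain ⟨ε, hε, hball⟩ := Metric.nhds_basis_closedBall.mem_iff.mp (hU.mem_nhds ht₀)
  obtain ⟨C, hC⟩ := ((isCompact_closedBall t₀ ε).prod isCompact_Icc).exists_bound_of_continuousOn
    (hF'.mono (prod_mono hball subset_rfl))
  have hIoc : Ι a b ⊆ Icc a b := by rw [uIoc_of_le hab]; exact Ioc_subset_Icc_self
  have hslice {G : ℝ → ℝ → E} (hG : ContinuousOn (Function.uncurry G) (U ×ˢ Icc a b))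
      {t : ℝ} (ht : t ∈ U) : IntervalIntegrable (G t) volume a b :=
    (hG.uncurry_left t ht).intervalIntegrable_of_Icc hab
  refine (hasDerivAt_integral_of_dominated_loc_of_deriv_le (bound := fun _ => C)
    (Metric.closedBall_mem_nhds t₀ hε) ?_ (hslice hF ht₀)
    (hslice hF' ht₀).def'.aestronglyMeasurable ?_ intervalIntegrable_const ?_).2
  · filter_upwards [hU.mem_nhds ht₀] with t ht using (hslice hF ht).def'.aestronglyMeasurable
  · exact .of_forall fun s hs t ht => hC (t, s) ⟨ht, hIoc hs⟩
  · exact .of_forall fun s hs t ht => hderiv t (hball ht) s (hIoc hs)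

end ParametricIntervalIntegral

theorem integral_eq_of_transport_eq {u ut us : ℝ → ℝ} {a b c k : ℝ} (hab : a ≤ b)
    (hus : ContinuousOn us (Icc a b)) (hderiv : ∀ s ∈ Icc a b, HasDerivAt u (us s) s)
    (htransport : ∀ s ∈ Icc a b, ut s + c * us s = -k * u s) :
    ∫ s in a..b, ut s = -k * (∫ s in a..b, u s) - c * (u b - u a) := by
  have hu : IntervalIntegrable u volume a b :=
    ContinuousOn.intervalIntegrable_of_Icc hab fun s hs =>
      (hderiv s hs).continuousAt.continuousWithinAt
  have hus_int : IntervalIntegrable us volume a b := hus.intervalIntegrable_of_Icc hab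
  have hftc : ∫ s in a..b, us s = u b - u a :=
    integral_eq_sub_of_hasDerivAt (fun s hs => hderiv s (uIcc_of_le hab ▸ hs)) hus_int
  rw [← hftc, ← intervalIntegral.integral_const_mul, ← intervalIntegral.integral_const_mul,
    ← integral_sub (hu.const_mul _) (hus_int.const_mul _)]
  refine integral_congr fun s hs => ?_
  linarith [htransport s (uIcc_of_le hab ▸ hs)]

theorem eq_of_hasDerivAt_zero {f : ℝ → ℝ} {a b : ℝ} (hab : a ≤ b)
    (hcont : ContinuousOn f (Icc a b)) (hderiv : ∀ x ∈ Ioo a b, HasDerivAt f 0 x) :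
    f b = f a := by
  rcases hab.eq_or_lt with rfl | hlt
  · rfl
  obtain ⟨c, -, hc⟩ := exists_hasDerivAt_eq_slope f (fun _ => 0) hlt hcont hderiv
  rw [eq_comm, div_eq_zero_iff, sub_eq_zero, sub_eq_zero] at hc
  exact hc.resolve_right hlt.ne'

theorem stmt_19_general (f h R : ℝ → ℝ) (μ lam g δ δ0 γ m NT : ℝ)
    (hm : 0 < m)
    (N P Z : ℝ → ℝ) (ρ ρt ρs : ℝ → ℝ → ℝ)
    (hρcont : ContinuousOn (fun p : ℝ × ℝ => ρ p.1 p.2) (Ici 0 ×ˢ Icc 0 m))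
    (hρtcont : ContinuousOn (fun p : ℝ × ℝ => ρt p.1 p.2) (Ici 0 ×ˢ Icc 0 m))
    (hρscont : ContinuousOn (fun p : ℝ × ℝ => ρs p.1 p.2) (Ici 0 ×ˢ Icc 0 m))
    (hρderiv : ∀ t ≥ (0 : ℝ), ∀ s ∈ Icc (0 : ℝ) m,
      HasDerivAt (fun t' => ρ t' s) (ρt t s) t ∧ HasDerivAt (fun s' => ρ t s') (ρs t s) s)
    (hpde : ∀ t ≥ (0 : ℝ), ∀ s ∈ Icc (0 : ℝ) m,
      ρt t s + R (P t) * ρs t s = -δ0 * ρ t s)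
    (hbc : ∀ t ≥ (0 : ℝ), R (P t) * ρ t 0 = γ * g * Z t * h (P t))
    (hNeq : ∀ t ≥ (0 : ℝ), HasDerivAt N (-μ * P t * f (N t) + lam * P t + δ * Z t
      + (1 - γ) * g * Z t * h (P t) + ∫ s in (0 : ℝ)..m, δ0 * ρ t s) t)
    (hPeq : ∀ t ≥ (0 : ℝ), HasDerivAt P (μ * P t * f (N t) - lam * P t
      - g * Z t * h (P t)) t)
    (hZeq : ∀ t ≥ (0 : ℝ), HasDerivAt Z (R (P t) * ρ t m - δ * Z t) t)
    (hNT : NT = N 0 + P 0 + Z 0 + ∫ s in (0 : ℝ)..m, ρ 0 s) :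
    ∀ t ≥ (0 : ℝ), N t + P t + Z t + (∫ s in (0 : ℝ)..m, ρ t s) = NT := by
  set G : ℝ → ℝ := fun t => ∫ s in (0 : ℝ)..m, ρ t s
  have hG_cont : ContinuousOn G (Ici 0) :=
    continuousOn_intervalIntegral_of_continuousOn_prod hm.le hρcont
  have hG_deriv (t : ℝ) (ht : 0 < t) : HasDerivAt G (∫ s in (0 : ℝ)..m, ρt t s) t :=
    hasDerivAt_intervalIntegral_of_continuousOn_prod isOpen_Ioi hm.le
      (hρcont.mono (prod_mono Ioi_subset_Ici_self subset_rfl))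
      (hρtcont.mono (prod_mono Ioi_subset_Ici_self subset_rfl))
      (fun t ht s hs => (hρderiv t (le_of_lt ht) s hs).1) ht
  have hbalance (t : ℝ) (ht : 0 < t) : HasDerivAt (fun t => N t + P t + Z t + G t) 0 t := by
    have hρt_integral := integral_eq_of_transport_eq hm.le
      (ContinuousOn.uncurry_left (f := ρs) t ht.le hρscont)
      (fun s hs => (hρderiv t ht.le s hs).2) (hpde t ht.le)
    refine ((((hNeq t ht.le).add (hPeq t ht.le)).add (hZeq t ht.le)).add
      (hG_deriv t ht)).congr_deriv ?_
    rw [hρt_integral, intervalIntegral.integral_const_mul]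
    linear_combination hbc t ht.le
  have hcont : ContinuousOn (fun t => N t + P t + Z t + G t) (Ici 0) := fun t ht =>
    (((hNeq t ht).continuousAt.add (hPeq t ht).continuousAt).add
      (hZeq t ht).continuousAt).continuousWithinAt.add (hG_cont t ht)
  intro t ht
  rw [hNT]
  exact eq_of_hasDerivAt_zero ht (hcont.mono Icc_subset_Ici_self) fun x hx => hbalance x hx.1

/-- Conservation of total biomass for the full structured NPZ model (PDE1): for a classical
solution `(N, P, Z, ρ)`, the total biomass `N(t) + P(t) + Z(t) + ∫₀^m ρ(t,s) ds` is constant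
in time, equal to its value `N_T` at `t = 0`. -/
theorem stmt_19 (f h R : ℝ → ℝ) (μ lam g δ δ0 γ m NT : ℝ)
    (hfc : Continuous f) (hhc : Continuous h) (hRc : Continuous R)
    (hμ : 0 < μ) (hlam : 0 < lam) (hg : 0 < g) (hδ : 0 < δ) (hδ0 : 0 ≤ δ0)
    (hγ : γ ∈ Ioc (0 : ℝ) 1) (hm : 0 < m)
    (N P Z : ℝ → ℝ) (ρ ρt ρs : ℝ → ℝ → ℝ)
    (hNc : ContinuousOn (deriv N) (Ici 0)) (hPc : ContinuousOn (deriv P) (Ici 0))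
    (hZc : ContinuousOn (deriv Z) (Ici 0))
    (hρcont : ContinuousOn (fun p : ℝ × ℝ => ρ p.1 p.2) (Ici 0 ×ˢ Icc 0 m))
    (hρtcont : ContinuousOn (fun p : ℝ × ℝ => ρt p.1 p.2) (Ici 0 ×ˢ Icc 0 m))
    (hρscont : ContinuousOn (fun p : ℝ × ℝ => ρs p.1 p.2) (Ici 0 ×ˢ Icc 0 m))
    (hρderiv : ∀ t ≥ (0 : ℝ), ∀ s ∈ Icc (0 : ℝ) m,
      HasDerivAt (fun t' => ρ t' s) (ρt t s) t ∧ HasDerivAt (fun s' => ρ t s') (ρs t s) s)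
    (hpde : ∀ t ≥ (0 : ℝ), ∀ s ∈ Icc (0 : ℝ) m,
      ρt t s + R (P t) * ρs t s = -δ0 * ρ t s)
    (hbc : ∀ t ≥ (0 : ℝ), R (P t) * ρ t 0 = γ * g * Z t * h (P t))
    (hNeq : ∀ t ≥ (0 : ℝ), HasDerivAt N (-μ * P t * f (N t) + lam * P t + δ * Z t
      + (1 - γ) * g * Z t * h (P t) + ∫ s in (0 : ℝ)..m, δ0 * ρ t s) t)
    (hPeq : ∀ t ≥ (0 : ℝ), HasDerivAt P (μ * P t * f (N t) - lam * P t
      - g * Z t * h (P t)) t)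
    (hZeq : ∀ t ≥ (0 : ℝ), HasDerivAt Z (R (P t) * ρ t m - δ * Z t) t)
    (hNT : NT = N 0 + P 0 + Z 0 + ∫ s in (0 : ℝ)..m, ρ 0 s) :
    ∀ t ≥ (0 : ℝ), N t + P t + Z t + (∫ s in (0 : ℝ)..m, ρ t s) = NT :=
  stmt_19_general f h R μ lam g δ δ0 γ m NT hm N P Z ρ ρt ρs hρcont hρtcont hρscont hρderiv hpde hbc
    hNeq hPeq hZeq hNT
end
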